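/- Let G be a finite group, x a q-element and y an r-element for distinct primes q and r, such that x and y commute and neither is central. Then the conjugacy classes x^G, y^G, and (xy)^G are pairwise distinct, the sizes of x^G and y^G both divide the size of (xy)^G, and xy is p-regular for any prime p different from q and r. -/

import Mathlib

/-!
Since `x` and `y` commute and have coprime orders, `o(xy) = o(x) o(y)` and both `x` and `y` are
powers of `xy`. Hence the centralizer of `xy` lies in those of `x` and `y`, which gives the
divisibility of the class sizes, and the three classes are separated by the orders of their
elements.
-/

section

variable {G : Type*} [Group G]

theorem Commute.mem_zpowers_mul_of_coprime {a b : G} (hab : Commute a b)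
    (hcop : (orderOf a).Coprime (orderOf b)) : a ∈ Subgroup.zpowers (a * b) := by
  obtain ⟨k, hk⟩ := exists_pow_eq_self_of_coprime hcop.symm
  have hpow : (a * b) ^ (orderOf b * k) = a := by
    rw [pow_mul, hab.mul_pow, pow_orderOf_eq_one, mul_one, hk]
  simpa only [hpow] using Subgroup.npow_mem_zpowers (a * b) (orderOf b * k)

theorem nat_card_isConj_eq_index_stabilizer (a : G) :
    Nat.card {z : G | IsConj a z} = (MulAction.stabilizer (ConjAct G) a).index := by
  rw [MulAction.index_stabilizer, ← Nat.card_coe_set_eq]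
  congr 2
  ext z
  exact isConj_comm.trans ConjAct.mem_orbit_conjAct.symm

theorem nat_card_isConj_dvd_of_mem_zpowers {a g : G} (h : a ∈ Subgroup.zpowers g) :
    Nat.card {z : G | IsConj a z} ∣ Nat.card {z : G | IsConj g z} := by
  simp only [nat_card_isConj_eq_index_stabilizer]
  refine Subgroup.index_dvd_of_le fun c hc => ?_
  obtain ⟨k, rfl⟩ := h
  rw [MulAction.mem_stabilizer_iff] at hc ⊢
  rw [smul_zpow', hc]

theorem IsConj.orderOf_eq {a b : G} (h : IsConj a b) : orderOf a = orderOf b :=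
  let ⟨_, hc⟩ := h
  hc.orderOf_eq

theorem not_isConj_of_coprime_orderOf {a b : G} (hcop : (orderOf a).Coprime (orderOf b))
    (ha : a ≠ 1) : ¬IsConj a b := fun h => by
  rw [← h.orderOf_eq, Nat.coprime_self, orderOf_eq_one_iff] at hcop
  exact ha hcop

theorem Commute.not_isConj_mul_right_of_coprime {a b : G} (hab : Commute a b)
    (hcop : (orderOf a).Coprime (orderOf b)) (hb : b ≠ 1) : ¬IsConj a (a * b) := fun h => by
  have horder := h.orderOf_eq
  rw [hab.orderOf_mul_eq_mul_orderOf_of_coprime hcop] at horder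
  have ha0 : orderOf a ≠ 0 := fun h0 => by
    rw [h0, Nat.coprime_zero_left, orderOf_eq_one_iff] at hcop
    exact hb hcop
  exact hb (orderOf_eq_one_iff.mp ((left_eq_mul₀ ha0).mp horder))

end

theorem Nat.Prime.eq_or_eq_of_dvd_pow_mul_pow {p q r n m : ℕ} (hp : p.Prime) (hq : q.Prime)
    (hr : r.Prime) (h : p ∣ q ^ n * r ^ m) : p = q ∨ p = r :=
  (hp.dvd_mul.mp h).imp
    (fun h => (Nat.prime_dvd_prime_iff_eq hp hq).mp (hp.dvd_of_dvd_pow h))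
    (fun h => (Nat.prime_dvd_prime_iff_eq hp hr).mp (hp.dvd_of_dvd_pow h))

theorem conj_classes_of_commuting_prime_power_elements_general (G : Type*) [Group G]
    (q r : ℕ) (hq : q.Prime) (hr : r.Prime) (hqr : q ≠ r) (x y : G)
    (hx : ∃ n : ℕ, orderOf x = q ^ n) (hy : ∃ m : ℕ, orderOf y = r ^ m)
    (hc : Commute x y)
    (hxnc : x ∉ Subgroup.center G) (hync : y ∉ Subgroup.center G) :
    (¬ IsConj x y ∧ ¬ IsConj x (x * y) ∧ ¬ IsConj y (x * y)) ∧
    Nat.card {z : G | IsConj x z} ∣ Nat.card {z : G | IsConj (x * y) z} ∧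
    Nat.card {z : G | IsConj y z} ∣ Nat.card {z : G | IsConj (x * y) z} ∧
    ∀ p : ℕ, p.Prime → p ≠ q → p ≠ r → ¬ p ∣ orderOf (x * y) := by
  obtain ⟨n, hxn⟩ := hx
  obtain ⟨m, hym⟩ := hy
  have hx1 : x ≠ 1 := fun h => hxnc (h ▸ Subgroup.one_mem _)
  have hy1 : y ≠ 1 := fun h => hync (h ▸ Subgroup.one_mem _)
  have hcop : (orderOf x).Coprime (orderOf y) :=
    hxn ▸ hym ▸ Nat.Coprime.pow n m ((Nat.coprime_primes hq hr).mpr hqr)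
  refine ⟨⟨not_isConj_of_coprime_orderOf hcop hx1, hc.not_isConj_mul_right_of_coprime hcop hy1,
    ?_⟩, nat_card_isConj_dvd_of_mem_zpowers (hc.mem_zpowers_mul_of_coprime hcop), ?_,
    fun p hp hpq hpr hdvd => ?_⟩
  · rw [hc.eq]
    exact hc.symm.not_isConj_mul_right_of_coprime hcop.symm hx1
  · rw [hc.eq]
    exact nat_card_isConj_dvd_of_mem_zpowers (hc.symm.mem_zpowers_mul_of_coprime hcop.symm)
  · rw [hc.orderOf_mul_eq_mul_orderOf_of_coprime hcop, hxn, hym] at hdvd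
    exact (hp.eq_or_eq_of_dvd_pow_mul_pow hq hr hdvd).elim hpq hpr

theorem conj_classes_of_commuting_prime_power_elements (G : Type*) [Group G] [Finite G]
    (q r : ℕ) (hq : q.Prime) (hr : r.Prime) (hqr : q ≠ r) (x y : G)
    (hx : ∃ n : ℕ, orderOf x = q ^ n) (hy : ∃ m : ℕ, orderOf y = r ^ m)
    (hc : Commute x y)
    (hxnc : x ∉ Subgroup.center G) (hync : y ∉ Subgroup.center G) :
    (¬ IsConj x y ∧ ¬ IsConj x (x * y) ∧ ¬ IsConj y (x * y)) ∧
    Nat.card {z : G | IsConj x z} ∣ Nat.card {z : G | IsConj (x * y) z} ∧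
    Nat.card {z : G | IsConj y z} ∣ Nat.card {z : G | IsConj (x * y) z} ∧
    ∀ p : ℕ, p.Prime → p ≠ q → p ≠ r → ¬ p ∣ orderOf (x * y) :=
  conj_classes_of_commuting_prime_power_elements_general G q r hq hr hqr x y hx hy hc hxnc hync
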